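/- Let G and G' be achievement positional games on disjoint vertex sets. If o(G)=L and o(G')=R^-, then Left has a winning strategy on G∪G' as first player, i.e. o(G∪G')∈{L, L^-, N}. -/

import Mathlib

namespace APG

/-- The two players: Left and Right. -/
inductive Player : Type
  | L : Player
  | R : Player
deriving DecidableEq, Repr

/-- The opponent of a player. -/
def Player.other : Player → Player
  | .L => .R
  | .R => .L

/-- An achievement positional game: a finite vertex set together with the set of
blue edges (Left's winning sets) and the set of red edges (Right's winning sets). -/
structure Game : Type where
  V : Finset ℕ
  EL : Finset (Finset ℕ)
  ER : Finset (Finset ℕ)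

/-- The edges are nonempty subsets of the vertex set. -/
def WellFormed (G : Game) : Prop :=
  (∀ e ∈ G.EL, e ⊆ G.V ∧ e.Nonempty) ∧ (∀ e ∈ G.ER, e ⊆ G.V ∧ e.Nonempty)

/-- The winning sets of a given player. -/
def Game.edges (G : Game) : Player → Finset (Finset ℕ)
  | .L => G.EL
  | .R => G.ER

/-- The player who makes the `i`-th move (0-indexed) when `s` moves first. -/
def mover (s : Player) (i : ℕ) : Player := if i % 2 = 0 then s else s.other

/-- The set of vertices picked by player `p` along the history `h`
(the chronological list of the moves played so far), when `s` moved first. -/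
def picked (s p : Player) (h : List ℕ) : Finset ℕ :=
  ((Finset.range h.length).filter fun i => mover s i = p).image fun i => h.getD i 0

/-- The set `S` of picked vertices fills some edge of `E`. -/
def fills (E : Finset (Finset ℕ)) (S : Finset ℕ) : Prop := ∃ e ∈ E, e ⊆ S

/-- The game is over: some player has picked all the vertices of one of their edges. -/
def ended (G : Game) (s : Player) (h : List ℕ) : Prop :=
  fills G.EL (picked s .L h) ∨ fills G.ER (picked s .R h)

/-- `h` is a legal history: no vertex is picked twice, every picked vertex belongs to
the board, and no move is made after the game has ended. -/
def ValidHist (G : Game) (s : Player) (h : List ℕ) : Prop :=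
  h.Nodup ∧ (∀ x ∈ h, x ∈ G.V) ∧ ∀ k, k < h.length → ¬ ended G s (h.take k)

/-- A strategy: a map assigning to each position (history) a vertex to pick. -/
abbrev Strategy := List ℕ → ℕ

/-- Along `h`, every move of player `p` agrees with the strategy `σ`. -/
def Follows (s p : Player) (σ : Strategy) (h : List ℕ) : Prop :=
  ∀ k, k < h.length → mover s k = p → h.getD k 0 = σ (h.take k)

/-- A finished play: either the game has ended or all vertices have been picked. -/
def Complete (G : Game) (s : Player) (h : List ℕ) : Prop :=
  ended G s h ∨ h.length = G.V.card

/-- The strategy `σ` of player `p` always suggests a legal move (an unpicked vertex)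
whenever the game is not over and it is `p`'s turn. -/
def Legal (G : Game) (s p : Player) (σ : Strategy) : Prop :=
  ∀ h, ValidHist G s h → Follows s p σ h → ¬ ended G s h → h.length < G.V.card →
    mover s h.length = p → σ h ∈ G.V ∧ σ h ∉ h

/-- Player `p` has a winning strategy on `G` when `s` moves first: following it,
every finished play ends with `p` having filled one of their edges (and, the game
having ended right there, the opponent has not filled an edge first). -/
def WinsAs (G : Game) (s p : Player) : Prop :=
  ∃ σ : Strategy, Legal G s p σ ∧
    ∀ h, ValidHist G s h → Follows s p σ h → Complete G s h →
      fills (G.edges p) (picked s p h)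

/-- Player `p` has a non-losing strategy on `G` when `s` moves first: following it,
the opponent never fills one of their edges. -/
def NonLosingAs (G : Game) (s p : Player) : Prop :=
  ∃ σ : Strategy, Legal G s p σ ∧
    ∀ h, ValidHist G s h → Follows s p σ h → Complete G s h →
      ¬ fills (G.edges p.other) (picked s p.other h)

/-- The possible results of the game, for a fixed starting player. -/
inductive Result : Type
  | Lwin : Result
  | draw : Result
  | Rwin : Result
deriving DecidableEq, Repr

/-- The result of `G` with optimal play, when `s` moves first, is `r`:
a win for a player means that player has a winning strategy, a draw means
both players have non-losing strategies. -/
def resultIs (G : Game) (s : Player) : Result → Prop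
  | .Lwin => WinsAs G s .L
  | .Rwin => WinsAs G s .R
  | .draw => NonLosingAs G s .L ∧ NonLosingAs G s .R

/-- An outcome: the pair of results with optimal play
(when Left starts, when Right starts). -/
abbrev Outcome := Result × Result

/-- `G` has outcome `o`. -/
def hasOutcome (G : Game) (o : Outcome) : Prop :=
  resultIs G .L o.1 ∧ resultIs G .R o.2

/-- Numerical value of a result, from Left's point of view:
Right wins < draw < Left wins. -/
def Result.val : Result → ℕ
  | .Rwin => 0
  | .draw => 1
  | .Lwin => 2

/-- The partial order `≤_L` on outcomes, comparing both components simultaneously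
from Left's point of view. -/
def outLE (o o' : Outcome) : Prop := o.1.val ≤ o'.1.val ∧ o.2.val ≤ o'.2.val

def oL : Outcome := (.Lwin, .Lwin)
def oLminus : Outcome := (.Lwin, .draw)
def oN : Outcome := (.Lwin, .Rwin)
def oD : Outcome := (.draw, .draw)
def oRminus : Outcome := (.draw, .Rwin)
def oR : Outcome := (.Rwin, .Rwin)

/-- The updated game `G_u` after Left has picked `u`. -/
def subL (G : Game) (u : ℕ) : Game where
  V := G.V.erase u
  EL := G.EL.image fun e => e.erase u
  ER := G.ER.filter fun e => u ∉ e

/-- The updated game `G^u` after Right has picked `u`. -/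
def subR (G : Game) (u : ℕ) : Game where
  V := G.V.erase u
  EL := G.EL.filter fun e => u ∉ e
  ER := G.ER.image fun e => e.erase u

/-- The updated game `G_u^v` after Left has picked `u` and Right has picked `v`. -/
def updLR (G : Game) (u v : ℕ) : Game where
  V := (G.V.erase u).erase v
  EL := (G.EL.filter fun e => v ∉ e).image fun e => e.erase u
  ER := (G.ER.filter fun e => u ∉ e).image fun e => e.erase v

/-- The disjoint union of two games. -/
def gunion (G G' : Game) : Game where
  V := G.V ∪ G'.V
  EL := G.EL ∪ G'.EL
  ER := G.ER ∪ G'.ER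


/-!
Left opens `G'` with a first-player non-losing strategy and afterwards answers every move of
Right in the component where it was made: in `G'` with that strategy, in `G` with a
second-player winning strategy. Right then never fills a red edge of `G'`, and the moves made
inside `G` form a play of `G` that Left wins. The two can only get out of step once `G'` is
exhausted, when Left may have to move in `G` with nothing to answer; an extra vertex never hurts
in an achievement game, and if the strategy later asks for it, Left takes another free vertex
instead. By Zermelo's theorem, beating every strategy of Right gives Left a winning strategy.
-/

lemma Player.other_other (p : Player) : p.other.other = p := by cases p <;> rfl

lemma Player.eq_other_iff_ne {a b : Player} : a = b.other ↔ a ≠ b := by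
  cases a <;> cases b <;> decide

lemma mover_of_even {n : ℕ} (hn : n % 2 = 0) (s : Player) : mover s n = s := by
  simp [mover, hn]

lemma mover_of_odd {n : ℕ} (hn : n % 2 = 1) (s : Player) : mover s n = s.other := by
  simp [mover, hn]

lemma picked_nil (s p : Player) : picked s p [] = ∅ := by
  simp [picked]

lemma picked_append_singleton (s p : Player) (h : List ℕ) (x : ℕ) :
    picked s p (h ++ [x]) =
      if mover s h.length = p then insert x (picked s p h) else picked s p h := by
  have hget : ∀ i ∈ (Finset.range h.length).filter (mover s · = p),
      (h ++ [x]).getD i 0 = h.getD i 0 := fun i hi => by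
    have hi' := Finset.mem_range.mp (Finset.mem_filter.mp hi).1
    simp [List.getD, List.getElem?_append_left hi']
  simp only [picked, List.length_append, List.length_singleton, Finset.range_add_one,
    Finset.filter_insert]
  split_ifs
  · rw [Finset.image_insert, Finset.image_congr hget]
    simp [List.getD]
  · exact Finset.image_congr hget

lemma picked_append_subset (s p : Player) (h : List ℕ) (x : ℕ) :
    picked s p (h ++ [x]) ⊆ insert x (picked s p h) := by
  rw [picked_append_singleton]
  split_ifs
  exacts [subset_rfl, Finset.subset_insert _ _]

lemma picked_union_picked (s : Player) (h : List ℕ) :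
    picked s .L h ∪ picked s .R h = h.toFinset := by
  ext a
  simp only [picked, Finset.mem_union, Finset.mem_image, Finset.mem_filter, Finset.mem_range,
    List.mem_toFinset, List.mem_iff_getElem]
  constructor
  · rintro (⟨i, ⟨hi, -⟩, rfl⟩ | ⟨i, ⟨hi, -⟩, rfl⟩) <;>
      exact ⟨i, hi, by simp [List.getD, hi]⟩
  · rintro ⟨i, hi, rfl⟩
    have hget : h.getD i 0 = h[i] := by simp [List.getD, hi]
    cases hm : mover s i
    exacts [Or.inl ⟨i, ⟨hi, hm⟩, hget⟩, Or.inr ⟨i, ⟨hi, hm⟩, hget⟩]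

lemma fills.mono {E : Finset (Finset ℕ)} {S T : Finset ℕ} (h : fills E S) (hST : S ⊆ T) :
    fills E T := by
  obtain ⟨e, he, hs⟩ := h; exact ⟨e, he, hs.trans hST⟩

lemma fills.mono_edges {E E' : Finset (Finset ℕ)} {S : Finset ℕ} (h : fills E S)
    (hE : E ⊆ E') : fills E' S := by
  obtain ⟨e, he, hs⟩ := h; exact ⟨e, hE he, hs⟩

lemma validHist_nil (G : Game) (s : Player) : ValidHist G s [] :=
  ⟨List.nodup_nil, by simp, by simp⟩

lemma follows_nil (s p : Player) (σ : Strategy) : Follows s p σ [] := by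
  simp [Follows]

lemma validHist_append_singleton {G : Game} {s : Player} {h : List ℕ} {x : ℕ} :
    ValidHist G s (h ++ [x]) ↔ ValidHist G s h ∧ x ∈ G.V ∧ x ∉ h ∧ ¬ ended G s h := by
  simp only [ValidHist, List.nodup_append, List.nodup_singleton, List.mem_append,
    List.mem_singleton, List.length_append, List.length_singleton, Nat.lt_succ_iff_lt_or_eq]
  constructor
  · rintro ⟨⟨hnd, -, hdisj⟩, hmem, hend⟩
    refine ⟨⟨hnd, fun y hy => hmem y (Or.inl hy), fun k hk => ?_⟩, hmem x (Or.inr rfl),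
      fun hx => hdisj x hx x rfl rfl, by simpa using hend h.length (Or.inr rfl)⟩
    simpa [List.take_append_of_le_length hk.le] using hend k (Or.inl hk)
  · rintro ⟨⟨hnd, hmem, hend⟩, hxV, hxh, hne⟩
    refine ⟨⟨hnd, trivial, fun a ha b hb hab => hxh (hb ▸ hab ▸ ha)⟩,
      fun y hy => hy.elim (hmem y) (· ▸ hxV), fun k hk => ?_⟩
    rcases hk with hk | rfl
    · simpa [List.take_append_of_le_length hk.le] using hend k hk
    · simpa using hne

lemma follows_append_singleton {s p : Player} {σ : Strategy} {h : List ℕ} {x : ℕ} :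
    Follows s p σ (h ++ [x]) ↔ Follows s p σ h ∧ (mover s h.length = p → x = σ h) := by
  simp only [Follows, List.length_append, List.length_singleton, Nat.lt_succ_iff_lt_or_eq]
  constructor
  · intro hf
    refine ⟨fun k hk hm => ?_, fun hm => by simpa [List.getD] using hf h.length (Or.inr rfl) hm⟩
    simpa [List.getD, List.getElem?_append_left hk, List.take_append_of_le_length hk.le]
      using hf k (Or.inl hk) hm
  · rintro ⟨hf, hx⟩ k (hk | rfl) hm
    · simpa [List.getD, List.getElem?_append_left hk, List.take_append_of_le_length hk.le]
        using hf k hk hm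
    · simpa [List.getD] using hx hm

lemma Follows.append_of_mover_ne {s p : Player} {σ : Strategy} {h : List ℕ}
    (hf : Follows s p σ h) (hm : mover s h.length ≠ p) (x : ℕ) : Follows s p σ (h ++ [x]) :=
  follows_append_singleton.mpr ⟨hf, fun hm' => absurd hm' hm⟩

lemma ValidHist.toFinset_subset {G : Game} {s : Player} {h : List ℕ} (hv : ValidHist G s h) :
    h.toFinset ⊆ G.V :=
  fun a ha => hv.2.1 a (List.mem_toFinset.mp ha)

lemma ValidHist.length_le {G : Game} {s : Player} {h : List ℕ} (hv : ValidHist G s h) :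
    h.length ≤ G.V.card := by
  rw [← List.toFinset_card_of_nodup hv.1]
  exact Finset.card_le_card hv.toFinset_subset

lemma ValidHist.length_eq_card_iff {G : Game} {s : Player} {h : List ℕ}
    (hv : ValidHist G s h) : h.length = G.V.card ↔ G.V ⊆ h.toFinset := by
  rw [← List.toFinset_card_of_nodup hv.1]
  exact ⟨fun hc => (Finset.eq_of_subset_of_card_le hv.toFinset_subset hc.ge).ge,
    fun hsub => congrArg Finset.card (hv.toFinset_subset.antisymm hsub)⟩

lemma ValidHist.length_lt_card_iff {G : Game} {s : Player} {h : List ℕ}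
    (hv : ValidHist G s h) : h.length < G.V.card ↔ ∃ v ∈ G.V, v ∉ h := by
  rw [lt_iff_le_and_ne, ne_eq, hv.length_eq_card_iff, Finset.not_subset]
  simp [hv.length_le]

lemma not_complete_of_validHist_append {G : Game} {s : Player} {h : List ℕ} {x : ℕ}
    (hv : ValidHist G s (h ++ [x])) : ¬ Complete G s h := by
  obtain ⟨hv, hxV, hxh, hne⟩ := validHist_append_singleton.mp hv
  rintro (hend | hfull)
  · exact hne hend
  · exact hxh (List.mem_toFinset.mp ((hv.length_eq_card_iff.mp hfull) hxV))

section Determinacy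

variable {G : Game} {s p : Player}

open Classical in
variable (G s p) in
noncomputable def Winnable (h : List ℕ) : Prop :=
  if _ : ended G s h ∨ G.V.card ≤ h.length then fills (G.edges p) (picked s p h)
  else if mover s h.length = p then ∃ x ∈ G.V, x ∉ h ∧ Winnable (h ++ [x])
  else ∀ x ∈ G.V, x ∉ h → Winnable (h ++ [x])
termination_by G.V.card - h.length
decreasing_by all_goals simp only [List.length_append, List.length_singleton]; omega

lemma winnable_iff_of_complete {h : List ℕ} (hc : Complete G s h) :
    Winnable G s p h ↔ fills (G.edges p) (picked s p h) := by
  rw [Winnable, dif_pos (hc.imp_right (·.ge))]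

lemma not_ended_or_le_of_not_complete {h : List ℕ} (hv : ValidHist G s h)
    (hc : ¬ Complete G s h) : ¬ (ended G s h ∨ G.V.card ≤ h.length) := by
  rintro (hend | hle)
  exacts [hc (Or.inl hend), hc (Or.inr (hv.length_le.antisymm hle))]

lemma winnable_iff_exists {h : List ℕ} (hv : ValidHist G s h) (hc : ¬ Complete G s h)
    (hm : mover s h.length = p) :
    Winnable G s p h ↔ ∃ x ∈ G.V, x ∉ h ∧ Winnable G s p (h ++ [x]) := by
  rw [Winnable, dif_neg (not_ended_or_le_of_not_complete hv hc), if_pos hm]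

lemma winnable_iff_forall {h : List ℕ} (hv : ValidHist G s h) (hc : ¬ Complete G s h)
    (hm : mover s h.length ≠ p) :
    Winnable G s p h ↔ ∀ x ∈ G.V, x ∉ h → Winnable G s p (h ++ [x]) := by
  rw [Winnable, dif_neg (not_ended_or_le_of_not_complete hv hc), if_neg hm]

open Classical in
variable (G) in
noncomputable def greedy (P : List ℕ → Prop) : Strategy := fun h =>
  if hP : ∃ x ∈ G.V, x ∉ h ∧ P (h ++ [x]) then hP.choose
  else if hx : ∃ x ∈ G.V, x ∉ h then hx.choose else 0

lemma greedy_mem {P : List ℕ → Prop} {h : List ℕ} (hx : ∃ x ∈ G.V, x ∉ h) :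
    greedy G P h ∈ G.V ∧ greedy G P h ∉ h := by
  unfold greedy
  split_ifs with hP
  exacts [⟨hP.choose_spec.1, hP.choose_spec.2.1⟩, hx.choose_spec]

lemma greedy_spec {P : List ℕ → Prop} {h : List ℕ}
    (hP : ∃ x ∈ G.V, x ∉ h ∧ P (h ++ [x])) : P (h ++ [greedy G P h]) := by
  rw [greedy, dif_pos hP]
  exact hP.choose_spec.2.2

lemma greedy_legal (P : List ℕ → Prop) (q : Player) : Legal G s q (greedy G P) :=
  fun _ hv _ _ hlt _ => greedy_mem (hv.length_lt_card_iff.mp hlt)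

lemma greedy_invariant {P : List ℕ → Prop} {q : Player} (h0 : P [])
    (hstep : ∀ h, ValidHist G s h → ¬ Complete G s h → P h →
      (mover s h.length = q → ∃ x ∈ G.V, x ∉ h ∧ P (h ++ [x])) ∧
      (mover s h.length ≠ q → ∀ x ∈ G.V, x ∉ h → P (h ++ [x])))
    {h : List ℕ} (hv : ValidHist G s h) (hf : Follows s q (greedy G P) h) : P h := by
  induction h using List.reverseRecOn with
  | nil => exact h0
  | append_singleton h x ih =>
    obtain ⟨hv', hxV, hxh, -⟩ := validHist_append_singleton.mp hv
    obtain ⟨hf', hx⟩ := follows_append_singleton.mp hf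
    have hstep' := hstep h hv' (not_complete_of_validHist_append hv) (ih hv' hf')
    by_cases hm : mover s h.length = q
    · exact hx hm ▸ greedy_spec (hstep'.1 hm)
    · exact hstep'.2 hm x hxV hxh

variable (G s p) in
/-- Zermelo's theorem; `Winnable G s p []` decides which side holds. -/
theorem winsAs_or_nonLosingAs : WinsAs G s p ∨ NonLosingAs G s p.other := by
  by_cases h0 : Winnable G s p []
  · refine Or.inl ⟨_, greedy_legal (Winnable G s p) p, fun h hv hf hc => ?_⟩
    refine (winnable_iff_of_complete hc).mp (greedy_invariant h0 (fun h hv hc hW => ?_) hv hf)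
    exact ⟨fun hm => (winnable_iff_exists hv hc hm).mp hW,
      fun hm => (winnable_iff_forall hv hc hm).mp hW⟩
  · refine Or.inr ⟨_, greedy_legal (¬ Winnable G s p ·) p.other, fun h hv hf hc hfill => ?_⟩
    rw [Player.other_other] at hfill
    refine greedy_invariant h0 (fun h hv hc hW => ⟨fun hm => ?_, fun hm => ?_⟩) hv hf
      ((winnable_iff_of_complete hc).mpr hfill)
    · have hm' := Player.eq_other_iff_ne.mp hm
      simpa [winnable_iff_forall hv hc hm'] using hW
    · have hm' : mover s h.length = p := not_ne_iff.mp (mt Player.eq_other_iff_ne.mpr hm)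
      simpa [winnable_iff_exists hv hc hm'] using hW

variable (G s) in
theorem exists_resultIs : ∃ r, resultIs G s r := by
  rcases winsAs_or_nonLosingAs G s .L with hL | hR
  · exact ⟨.Lwin, hL⟩
  rcases winsAs_or_nonLosingAs G s .R with hR' | hL
  · exact ⟨.Rwin, hR'⟩
  · exact ⟨.draw, hL, hR⟩

theorem winsAs_of_forall_exists_play
    (H : ∀ τ, Legal G s p.other τ → ∃ h, ValidHist G s h ∧ Follows s p.other τ h ∧
      Complete G s h ∧ fills (G.edges p) (picked s p h)) : WinsAs G s p := by
  refine (winsAs_or_nonLosingAs G s p).resolve_right fun ⟨τ, hτ, hnl⟩ => ?_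
  obtain ⟨h, hv, hf, hc, hfill⟩ := H τ hτ
  exact hnl h hv hf hc (by rwa [Player.other_other])

end Determinacy

def IsWinning (G : Game) (s p : Player) (σ : Strategy) : Prop :=
  ∀ h, ValidHist G s h → Follows s p σ h → Complete G s h →
    fills (G.edges p) (picked s p h)

def IsNonLosing (G : Game) (s p : Player) (σ : Strategy) : Prop :=
  ∀ h, ValidHist G s h → Follows s p σ h → Complete G s h →
    ¬ fills (G.edges p.other) (picked s p.other h)

/-- Left's extra vertex `d` cannot hurt: once it is the only free vertex, it is the only legal
move left for `σ`, so the play of `σ` can be completed with it. -/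
theorem IsWinning.fills_of_subset {G : Game} {s : Player} {σ : Strategy}
    (hσ : IsWinning G s .L σ) (hleg : Legal G s .L σ) {f : List ℕ} {d : Option ℕ}
    (hv : ValidHist G s f) (hf : Follows s .L σ f) (hcov : G.V ⊆ f.toFinset ∪ d.toFinset) :
    fills G.EL (picked s .L f ∪ d.toFinset) := by
  by_cases hc : Complete G s f
  · exact (hσ f hv hf hc).mono Finset.subset_union_left
  have hlt : f.length < G.V.card := hv.length_le.lt_of_ne fun hfull => hc (Or.inr hfull)
  obtain ⟨z, hzV, hzf⟩ := hv.length_lt_card_iff.mp hlt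
  have hzd : d = some z := by
    simpa [hzf] using hcov hzV
  have hne : ¬ ended G s f := fun hend => hc (Or.inl hend)
  have hv' : ValidHist G s (f ++ [z]) := validHist_append_singleton.mpr ⟨hv, hzV, hzf, hne⟩
  have hf' : Follows s .L σ (f ++ [z]) := by
    refine follows_append_singleton.mpr ⟨hf, fun hm => ?_⟩
    obtain ⟨hσV, hσf⟩ := hleg f hv hf hne hlt hm
    have hσz := hcov hσV
    simp only [hzd, Finset.mem_union, List.mem_toFinset, hσf, false_or, Option.toFinset_some,
      Finset.mem_singleton] at hσz
    exact hσz.symm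
  have hc' : Complete G s (f ++ [z]) := by
    refine Or.inr (hv'.length_eq_card_iff.mpr fun a ha => ?_)
    simpa [hzd, or_comm] using hcov ha
  refine (hσ _ hv' hf' hc').mono ((picked_append_subset s .L f z).trans ?_)
  rw [hzd, Option.toFinset_some, Finset.union_singleton]

def proj (S : Finset ℕ) (h : List ℕ) : List ℕ := h.filter (· ∈ S)

lemma mem_proj {S : Finset ℕ} {h : List ℕ} {x : ℕ} :
    x ∈ proj S h ↔ x ∈ h ∧ x ∈ S := by
  simp [proj]

lemma proj_append_of_mem {S : Finset ℕ} {h : List ℕ} {x : ℕ} (hx : x ∈ S) :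
    proj S (h ++ [x]) = proj S h ++ [x] := by
  simp [proj, hx]

lemma proj_append_of_notMem {S : Finset ℕ} {h : List ℕ} {x : ℕ} (hx : x ∉ S) :
    proj S (h ++ [x]) = proj S h := by
  simp [proj, hx]

lemma picked_append_inter_of_notMem {S : Finset ℕ} (s p : Player) (h : List ℕ) {x : ℕ}
    (hx : x ∉ S) : picked s p (h ++ [x]) ∩ S = picked s p h ∩ S := by
  rw [picked_append_singleton]
  split_ifs
  exacts [Finset.insert_inter_of_notMem hx, rfl]

/-- `f` is a play of `G`, started by `s`, in which Left follows `σ`, and whose moves are the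
moves of the Left-first play `h` inside `G.V`, except for at most one extra Left move `d` of `h`
that `f` does not contain. -/
structure Shadows (G : Game) (s : Player) (σ : Strategy) (h f : List ℕ) (d : Option ℕ) :
    Prop where
  valid : ValidHist G s f
  follows : Follows s .L σ f
  pickedR : picked s .R f = picked .L .R h ∩ G.V
  pickedL : picked s .L f ∪ d.toFinset = picked .L .L h ∩ G.V
  debt_notMem : ∀ z ∈ d, z ∉ f

namespace Shadows

variable {G : Game} {s : Player} {σ : Strategy} {h f : List ℕ} {d : Option ℕ}

lemma toFinset_union (sh : Shadows G s σ h f d) :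
    f.toFinset ∪ d.toFinset = h.toFinset ∩ G.V := by
  rw [← picked_union_picked s f, ← picked_union_picked .L h, Finset.union_right_comm,
    sh.pickedL, sh.pickedR, Finset.union_inter_distrib_right]

lemma mem_of_mem (sh : Shadows G s σ h f d) {x : ℕ} (hx : x ∈ f) : x ∈ h := by
  have := sh.toFinset_union ▸ Finset.mem_union_left d.toFinset (List.mem_toFinset.mpr hx)
  exact List.mem_toFinset.mp (Finset.mem_inter.mp this).1

lemma mem_of_debt (sh : Shadows G s σ h f d) {z : ℕ} (hz : d = some z) :
    z ∈ h ∧ z ∈ G.V := by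
  have hz' : z ∈ d.toFinset := hz ▸ Option.mem_toFinset.mpr rfl
  have := sh.toFinset_union ▸ Finset.mem_union_right f.toFinset hz'
  simpa using this

lemma debt_eq_of_mem (sh : Shadows G s σ h f d) {x : ℕ} (hxh : x ∈ h) (hx : x ∈ G.V)
    (hxf : x ∉ f) : d = some x := by
  have := sh.toFinset_union.symm ▸ Finset.mem_inter.mpr ⟨List.mem_toFinset.mpr hxh, hx⟩
  simpa [hxf] using this

lemma length_lt (sh : Shadows G s σ h f d) {x : ℕ} (hx : x ∈ G.V) (hxh : x ∉ h) :
    f.length < G.V.card :=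
  sh.valid.length_lt_card_iff.mpr ⟨x, hx, fun hxf => hxh (sh.mem_of_mem hxf)⟩

lemma pickedL_subset (sh : Shadows G s σ h f d) : picked s .L f ⊆ picked .L .L h :=
  Finset.subset_union_left.trans (sh.pickedL ▸ Finset.inter_subset_left)

lemma ended_of_ended (sh : Shadows G s σ h f d) {H : Game} (hEL : G.EL ⊆ H.EL)
    (hER : G.ER ⊆ H.ER) (hend : ended G s f) : ended H .L h := by
  refine hend.imp (fun hL => (hL.mono_edges hEL).mono sh.pickedL_subset) fun hR => ?_
  exact (hR.mono_edges hER).mono (sh.pickedR ▸ Finset.inter_subset_left)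

lemma append_of_notMem (sh : Shadows G s σ h f d) {x : ℕ} (hx : x ∉ G.V) :
    Shadows G s σ (h ++ [x]) f d where
  valid := sh.valid
  follows := sh.follows
  pickedR := by rw [picked_append_inter_of_notMem _ _ _ hx, sh.pickedR]
  pickedL := by rw [picked_append_inter_of_notMem _ _ _ hx, sh.pickedL]
  debt_notMem := sh.debt_notMem

lemma append (sh : Shadows G s σ h f d) {x : ℕ} (hx : x ∈ G.V) (hxh : x ∉ h)
    (hne : ¬ ended G s f) (hturn : mover s f.length = mover .L h.length)
    (hσ : mover s f.length = .L → x = σ f) : Shadows G s σ (h ++ [x]) (f ++ [x]) d where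
  valid :=
    validHist_append_singleton.mpr ⟨sh.valid, hx, fun hxf => hxh (sh.mem_of_mem hxf), hne⟩
  follows := follows_append_singleton.mpr ⟨sh.follows, hσ⟩
  pickedR := by
    rw [picked_append_singleton, picked_append_singleton, hturn]
    split_ifs
    exacts [by rw [Finset.insert_inter_of_mem hx, sh.pickedR], sh.pickedR]
  pickedL := by
    rw [picked_append_singleton, picked_append_singleton, hturn]
    split_ifs
    · rw [Finset.insert_inter_of_mem hx, ← sh.pickedL, Finset.insert_union]
    · exact sh.pickedL
  debt_notMem z hz hzf := by
    rcases List.mem_append.mp hzf with hzf | hzx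
    · exact sh.debt_notMem z hz hzf
    · exact hxh (List.mem_singleton.mp hzx ▸ (sh.mem_of_debt hz).1)

lemma settle_debt (sh : Shadows G s σ h f d) {z : ℕ} (hz : d = some z)
    (hm : mover s f.length = .L) (hσ : σ f = z) (hne : ¬ ended G s f) :
    Shadows G s σ h (f ++ [z]) none where
  valid := validHist_append_singleton.mpr
    ⟨sh.valid, (sh.mem_of_debt hz).2, sh.debt_notMem z hz, hne⟩
  follows := follows_append_singleton.mpr ⟨sh.follows, fun _ => hσ.symm⟩
  pickedR := by rw [picked_append_singleton, if_neg (by rw [hm]; decide), sh.pickedR]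
  pickedL := by
    rw [picked_append_singleton, if_pos hm, ← sh.pickedL, hz]
    simp [Finset.union_singleton]
  debt_notMem := by simp

lemma add_debt (sh : Shadows G s σ h f none) (hm : mover .L h.length = .L) {x : ℕ}
    (hx : x ∈ G.V) (hxh : x ∉ h) : Shadows G s σ (h ++ [x]) f (some x) where
  valid := sh.valid
  follows := sh.follows
  pickedR := by rw [picked_append_singleton, if_neg (by rw [hm]; decide), sh.pickedR]
  pickedL := by
    rw [picked_append_singleton, if_pos hm, Finset.insert_inter_of_mem hx, ← sh.pickedL]
    simp [Finset.union_singleton]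
  debt_notMem z hz hzf := hxh (Option.some_injective _ hz ▸ sh.mem_of_mem hzf)

lemma fills_of_subset (sh : Shadows G s σ h f d) (hσ : IsWinning G s .L σ)
    (hleg : Legal G s .L σ) (hcov : G.V ⊆ h.toFinset) : fills G.EL (picked .L .L h) := by
  refine (hσ.fills_of_subset hleg sh.valid sh.follows ?_).mono
    (sh.pickedL ▸ Finset.inter_subset_left)
  rw [sh.toFinset_union]
  exact Finset.subset_inter hcov subset_rfl

end Shadows

/-- `f` is the play of `G` in which Left answers with `σ`, and `d` is Left's extra vertex in `G`.
The parity fields say that whenever Right is to move, Left has answered in both components. -/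
structure UnionPlay (G G' : Game) (σ σ' τ : Strategy) (h f : List ℕ) (d : Option ℕ) :
    Prop where
  valid : ValidHist (gunion G G') .L h
  follows : Follows .L .R τ h
  shadowG : Shadows G .R σ h f d
  shadowG' : Shadows G' .L σ' h (proj G'.V h) none
  debt_full : d.isSome → G'.V ⊆ h.toFinset
  debt_turn : d.isSome → h.length % 2 = 0 → f.length % 2 = 1
  turnR : h.length % 2 = 1 →
    f.length % 2 = 0 ∧ ((proj G'.V h).length % 2 = 1 ∨ G'.V ⊆ h.toFinset)
  turnL : h.length % 2 = 0 →
    f.length % 2 = (proj G'.V h).length % 2 ∨ G'.V ⊆ h.toFinset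

namespace UnionPlay

variable {G G' : Game} {σ σ' τ : Strategy} {h f : List ℕ} {d : Option ℕ}

lemma nil : UnionPlay G G' σ σ' τ [] [] none where
  valid := validHist_nil _ _
  follows := follows_nil _ _ _
  shadowG := ⟨validHist_nil _ _, follows_nil _ _ _, by simp [picked_nil], by simp [picked_nil],
    by simp⟩
  shadowG' := ⟨validHist_nil _ _, follows_nil _ _ _, by simp [proj, picked_nil],
    by simp [proj, picked_nil], by simp⟩
  debt_full := by simp
  debt_turn := by simp
  turnR := by simp
  turnL := by simp [proj]

lemma not_ended_G (up : UnionPlay G G' σ σ' τ h f d) (hne : ¬ ended (gunion G G') .L h) :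
    ¬ ended G .R f :=
  fun hend => hne (up.shadowG.ended_of_ended Finset.subset_union_left
    Finset.subset_union_left hend)

lemma not_ended_G' (up : UnionPlay G G' σ σ' τ h f d) (hne : ¬ ended (gunion G G') .L h) :
    ¬ ended G' .L (proj G'.V h) :=
  fun hend => hne (up.shadowG'.ended_of_ended Finset.subset_union_right
    Finset.subset_union_right hend)

lemma exists_fresh (up : UnionPlay G G' σ σ' τ h f d) (hσ : IsWinning G .R .L σ)
    (hleg : Legal G .R .L σ) (hne : ¬ ended (gunion G G') .L h) : ∃ x ∈ G.V, x ∉ h := by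
  by_contra! hc
  refine hne (Or.inl ((up.shadowG.fills_of_subset hσ hleg fun x hx => ?_).mono_edges
    Finset.subset_union_left))
  exact List.mem_toFinset.mpr (hc x hx)

lemma append_G (up : UnionPlay G G' σ σ' τ h f d) (hdisj : Disjoint G.V G'.V) {x : ℕ}
    (hx : x ∈ G.V) (hv : ValidHist (gunion G G') .L (h ++ [x]))
    (hf : Follows .L .R τ (h ++ [x])) (hturn : mover .R f.length = mover .L h.length)
    (hσ : mover .R f.length = .L → x = σ f) :
    UnionPlay G G' σ σ' τ (h ++ [x]) (f ++ [x]) d := by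
  obtain ⟨-, -, hxh, hne⟩ := validHist_append_singleton.mp hv
  have hxG' : x ∉ G'.V := Finset.disjoint_left.mp hdisj hx
  have hpar : f.length % 2 ≠ h.length % 2 := by
    intro heq
    rcases Nat.mod_two_eq_zero_or_one h.length with hh | hh <;>
      simp [mover, hh, heq, Player.other] at hturn
  have hsub : h.toFinset ⊆ (h ++ [x]).toFinset := fun a ha => by simp_all
  refine ⟨hv, hf, up.shadowG.append hx hxh (up.not_ended_G hne) hturn hσ, ?_, fun hd => ?_,
    fun hd hh => ?_, fun hh => ?_, fun hh => ?_⟩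
  · rw [proj_append_of_notMem hxG']; exact up.shadowG'.append_of_notMem hxG'
  · exact (up.debt_full hd).trans hsub
  · simp only [List.length_append, List.length_singleton] at hh ⊢
    have := (up.turnR (by omega)).1; omega
  · simp only [proj_append_of_notMem hxG', List.length_append, List.length_singleton] at hh ⊢
    rcases up.turnL (by omega) with h1 | h1
    · exact ⟨by omega, by omega⟩
    · exact ⟨by omega, Or.inr (h1.trans hsub)⟩
  · simp only [proj_append_of_notMem hxG', List.length_append, List.length_singleton] at hh ⊢
    rcases (up.turnR (by omega)) with ⟨h1, h2 | h2⟩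
    · exact Or.inl (by omega)
    · exact Or.inr (h2.trans hsub)

lemma append_G' (up : UnionPlay G G' σ σ' τ h f none) (hdisj : Disjoint G.V G'.V) {x : ℕ}
    (hx : x ∈ G'.V) (hv : ValidHist (gunion G G') .L (h ++ [x]))
    (hf : Follows .L .R τ (h ++ [x]))
    (hturn : mover .L (proj G'.V h).length = mover .L h.length)
    (hσ' : mover .L (proj G'.V h).length = .L → x = σ' (proj G'.V h)) :
    UnionPlay G G' σ σ' τ (h ++ [x]) f none := by
  obtain ⟨-, -, hxh, hne⟩ := validHist_append_singleton.mp hv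
  have hxG : x ∉ G.V := Finset.disjoint_right.mp hdisj hx
  have hF : ¬ G'.V ⊆ h.toFinset := fun hF => hxh (List.mem_toFinset.mp (hF hx))
  have hpar : (proj G'.V h).length % 2 = h.length % 2 := by
    rcases Nat.mod_two_eq_zero_or_one h.length with hh | hh <;>
      rcases Nat.mod_two_eq_zero_or_one (proj G'.V h).length with hg | hg <;>
      simp_all [mover, Player.other]
  have hsh' := up.shadowG'.append hx hxh (up.not_ended_G' hne) hturn hσ'
  rw [← proj_append_of_mem hx] at hsh'
  refine ⟨hv, hf, up.shadowG.append_of_notMem hxG, hsh', by simp, by simp,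
    fun hh => ?_, fun hh => ?_⟩
  · simp only [proj_append_of_mem hx, List.length_append, List.length_singleton] at hh ⊢
    have := (up.turnL (by omega)).resolve_right hF
    exact ⟨by omega, Or.inl (by omega)⟩
  · simp only [proj_append_of_mem hx, List.length_append, List.length_singleton] at hh ⊢
    have := (up.turnR (by omega)).1
    exact Or.inl (by omega)

lemma add_debt (up : UnionPlay G G' σ σ' τ h f none) (heven : h.length % 2 = 0)
    (hfeven : f.length % 2 = 0) (hF : G'.V ⊆ h.toFinset) {x : ℕ} (hx : x ∈ G.V)
    (hv : ValidHist (gunion G G') .L (h ++ [x])) (hf : Follows .L .R τ (h ++ [x])) :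
    UnionPlay G G' σ σ' τ (h ++ [x]) f (some x) := by
  obtain ⟨-, -, hxh, -⟩ := validHist_append_singleton.mp hv
  have hxG' : x ∉ G'.V := fun hxG' => hxh (List.mem_toFinset.mp (hF hxG'))
  have hsub : h.toFinset ⊆ (h ++ [x]).toFinset := fun a ha => by simp_all
  refine ⟨hv, hf, up.shadowG.add_debt (mover_of_even heven _) hx hxh, ?_,
    fun _ => hF.trans hsub, fun _ hh => by simp at hh; omega,
    fun _ => ⟨hfeven, Or.inr (hF.trans hsub)⟩, fun hh => by simp at hh; omega⟩
  rw [proj_append_of_notMem hxG']; exact up.shadowG'.append_of_notMem hxG'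

lemma settle_debt {z : ℕ} (up : UnionPlay G G' σ σ' τ h f (some z))
    (heven : h.length % 2 = 0) (hσ : σ f = z) (hne : ¬ ended (gunion G G') .L h) :
    UnionPlay G G' σ σ' τ h (f ++ [z]) none := by
  have hfodd := up.debt_turn rfl heven
  refine ⟨up.valid, up.follows,
    up.shadowG.settle_debt rfl (mover_of_odd hfodd _) hσ (up.not_ended_G hne), up.shadowG',
    by simp, by simp, fun hh => by omega, fun _ => Or.inr (up.debt_full rfl)⟩

lemma exists_right_move (up : UnionPlay G G' σ σ' τ h f d) (hdisj : Disjoint G.V G'.V)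
    (hτ : Legal (gunion G G') .L .R τ) (hodd : h.length % 2 = 1)
    (hc : ¬ Complete (gunion G G') .L h) :
    ∃ x f' d', UnionPlay G G' σ σ' τ (h ++ [x]) f' d' := by
  have hne : ¬ ended (gunion G G') .L h := fun hend => hc (Or.inl hend)
  have hm : mover .L h.length = .R := mover_of_odd hodd _
  obtain ⟨hyV, hyh⟩ := hτ h up.valid up.follows hne
    (up.valid.length_le.lt_of_ne fun hfull => hc (Or.inr hfull)) hm
  have hv := validHist_append_singleton.mpr ⟨up.valid, hyV, hyh, hne⟩
  have hf := follows_append_singleton.mpr ⟨up.follows, fun _ => rfl⟩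
  obtain ⟨hfeven, hg⟩ := up.turnR hodd
  rcases Finset.mem_union.mp hyV with hyG | hyG'
  · refine ⟨_, _, _, up.append_G hdisj hyG hv hf ?_ fun hm' => ?_⟩
    · rw [hm, mover_of_even hfeven]
    · simp [mover_of_even hfeven] at hm'
  · have hF : ¬ G'.V ⊆ h.toFinset := fun hF => hyh (List.mem_toFinset.mp (hF hyG'))
    obtain rfl : d = none := Option.not_isSome_iff_eq_none.mp fun hd => hF (up.debt_full hd)
    have hgodd := hg.resolve_right hF
    refine ⟨_, _, _, up.append_G' hdisj hyG' hv hf ?_ fun hm' => ?_⟩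
    · rw [hm, mover_of_odd hgodd]; rfl
    · simp [mover_of_odd hgodd, Player.other] at hm'

lemma exists_debt_move (up : UnionPlay G G' σ σ' τ h f none) (hσ : IsWinning G .R .L σ)
    (hleg : Legal G .R .L σ) (heven : h.length % 2 = 0) (hfeven : f.length % 2 = 0)
    (hF : G'.V ⊆ h.toFinset) (hne : ¬ ended (gunion G G') .L h) :
    ∃ x f' d', UnionPlay G G' σ σ' τ (h ++ [x]) f' d' := by
  obtain ⟨x, hx, hxh⟩ := up.exists_fresh hσ hleg hne
  refine ⟨x, f, some x, up.add_debt heven hfeven hF hx ?_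
    (up.follows.append_of_mover_ne (by simp [mover_of_even heven]) x)⟩
  exact validHist_append_singleton.mpr ⟨up.valid, Finset.mem_union_left _ hx, hxh, hne⟩

lemma exists_left_move_of_even (up : UnionPlay G G' σ σ' τ h f d)
    (hdisj : Disjoint G.V G'.V) (hσ : IsWinning G .R .L σ) (hleg : Legal G .R .L σ)
    (hleg' : Legal G' .L .L σ') (heven : h.length % 2 = 0) (hfeven : f.length % 2 = 0)
    (hne : ¬ ended (gunion G G') .L h) :
    ∃ x f' d', UnionPlay G G' σ σ' τ (h ++ [x]) f' d' := by
  obtain rfl : d = none := Option.not_isSome_iff_eq_none.mp fun hd => by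
    have := up.debt_turn hd heven; omega
  by_cases hF : G'.V ⊆ h.toFinset
  · exact up.exists_debt_move hσ hleg heven hfeven hF hne
  obtain ⟨v, hv, hvh⟩ := Finset.not_subset.mp hF
  have hgeven : (proj G'.V h).length % 2 = 0 := by
    have := (up.turnL heven).resolve_right hF; omega
  obtain ⟨hxV, hxg⟩ := hleg' _ up.shadowG'.valid up.shadowG'.follows (up.not_ended_G' hne)
    (up.shadowG'.length_lt hv (by simpa using hvh)) (mover_of_even hgeven _)
  have hxh : σ' (proj G'.V h) ∉ h := fun hxh => hxg (mem_proj.mpr ⟨hxh, hxV⟩)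
  refine ⟨_, _, _, up.append_G' hdisj hxV ?_ (up.follows.append_of_mover_ne
    (by simp [mover_of_even heven]) _) (by rw [mover_of_even heven, mover_of_even hgeven])
    fun _ => rfl⟩
  exact validHist_append_singleton.mpr ⟨up.valid, Finset.mem_union_right _ hxV, hxh, hne⟩

lemma exists_left_move_of_odd (up : UnionPlay G G' σ σ' τ h f d)
    (hdisj : Disjoint G.V G'.V) (hσ : IsWinning G .R .L σ) (hleg : Legal G .R .L σ)
    (heven : h.length % 2 = 0) (hfodd : f.length % 2 = 1)
    (hne : ¬ ended (gunion G G') .L h) :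
    ∃ x f' d', UnionPlay G G' σ σ' τ (h ++ [x]) f' d' := by
  obtain ⟨x, hx, hxh⟩ := up.exists_fresh hσ hleg hne
  obtain ⟨hmV, hmf⟩ := hleg f up.shadowG.valid up.shadowG.follows (up.not_ended_G hne)
    (up.shadowG.length_lt hx hxh) (mover_of_odd hfodd _)
  by_cases hmh : σ f ∈ h
  · obtain rfl := up.shadowG.debt_eq_of_mem hmh hmV hmf
    refine (up.settle_debt heven rfl hne).exists_debt_move hσ hleg heven ?_
      (up.debt_full rfl) hne
    simp only [List.length_append, List.length_singleton]; omega
  refine ⟨_, _, _, up.append_G hdisj hmV ?_ (up.follows.append_of_mover_ne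
    (by simp [mover_of_even heven]) _) (by rw [mover_of_even heven, mover_of_odd hfodd]; rfl)
    fun _ => rfl⟩
  exact validHist_append_singleton.mpr ⟨up.valid, Finset.mem_union_left _ hmV, hmh, hne⟩

theorem exists_complete {h f : List ℕ} {d : Option ℕ} (up : UnionPlay G G' σ σ' τ h f d)
    (hdisj : Disjoint G.V G'.V) (hσ : IsWinning G .R .L σ) (hleg : Legal G .R .L σ)
    (hleg' : Legal G' .L .L σ') (hτ : Legal (gunion G G') .L .R τ) :
    ∃ h' f' d', UnionPlay G G' σ σ' τ h' f' d' ∧ Complete (gunion G G') .L h' := by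
  by_cases hc : Complete (gunion G G') .L h
  · exact ⟨h, f, d, up, hc⟩
  have hne : ¬ ended (gunion G G') .L h := fun hend => hc (Or.inl hend)
  have hlt : h.length < (gunion G G').V.card :=
    up.valid.length_le.lt_of_ne fun hfull => hc (Or.inr hfull)
  obtain ⟨x, f', d', up'⟩ : ∃ x f' d', UnionPlay G G' σ σ' τ (h ++ [x]) f' d' := by
    rcases Nat.mod_two_eq_zero_or_one h.length with heven | hodd
    · rcases Nat.mod_two_eq_zero_or_one f.length with hfeven | hfodd
      · exact up.exists_left_move_of_even hdisj hσ hleg hleg' heven hfeven hne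
      · exact up.exists_left_move_of_odd hdisj hσ hleg heven hfodd hne
    · exact up.exists_right_move hdisj hτ hodd hc
  exact up'.exists_complete hdisj hσ hleg hleg' hτ
termination_by (gunion G G').V.card - h.length
decreasing_by simp only [List.length_append, List.length_singleton]; omega

lemma fills_of_complete (up : UnionPlay G G' σ σ' τ h f d) (hσ : IsWinning G .R .L σ)
    (hleg : Legal G .R .L σ) (hσ' : IsNonLosing G' .L .L σ') (hGR : ∀ e ∈ G.ER, e ⊆ G.V)
    (hG'R : ∀ e ∈ G'.ER, e ⊆ G'.V) (hc : Complete (gunion G G') .L h) :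
    fills (gunion G G').EL (picked .L .L h) := by
  rcases hc with (hL | ⟨e, he, hes⟩) | hfull
  · exact hL
  · rcases Finset.mem_union.mp he with heG | heG'
    · have hfR : fills G.ER (picked .R .R f) :=
        ⟨e, heG, up.shadowG.pickedR ▸ Finset.subset_inter hes (hGR e heG)⟩
      have hfL := hσ f up.shadowG.valid up.shadowG.follows (Or.inl (Or.inr hfR))
      exact (hfL.mono_edges Finset.subset_union_left).mono up.shadowG.pickedL_subset
    · have hgR : fills G'.ER (picked .L .R (proj G'.V h)) :=
        ⟨e, heG', up.shadowG'.pickedR ▸ Finset.subset_inter hes (hG'R e heG')⟩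
      exact absurd hgR (hσ' _ up.shadowG'.valid up.shadowG'.follows (Or.inl (Or.inr hgR)))
  · have hcov := Finset.subset_union_left.trans (up.valid.length_eq_card_iff.mp hfull)
    exact (up.shadowG.fills_of_subset hσ hleg hcov).mono_edges Finset.subset_union_left

end UnionPlay

theorem winsAs_gunion {G G' : Game} (hdisj : Disjoint G.V G'.V)
    (hGR : ∀ e ∈ G.ER, e ⊆ G.V) (hG'R : ∀ e ∈ G'.ER, e ⊆ G'.V)
    (hG : WinsAs G .R .L) (hG' : NonLosingAs G' .L .L) : WinsAs (gunion G G') .L .L := by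
  obtain ⟨σ, hleg, hσ⟩ := hG
  obtain ⟨σ', hleg', hσ'⟩ := hG'
  refine winsAs_of_forall_exists_play fun τ hτ => ?_
  obtain ⟨h, f, d, up, hc⟩ :=
    (UnionPlay.nil (σ := σ) (σ' := σ') (τ := τ)).exists_complete hdisj hσ hleg hleg' hτ
  exact ⟨h, up.valid, up.follows, hc, up.fills_of_complete hσ hleg hσ' hGR hG'R hc⟩

/-- If `o(G) = L` and `o(G') = R⁻`, then Left has a winning strategy on `G ∪ G'`
as first player, i.e. `o(G ∪ G') ∈ {L, L⁻, N}`. -/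
theorem union_L_Rminus (G G' : Game) (hG : WellFormed G) (hG' : WellFormed G')
    (hdisj : Disjoint G.V G'.V)
    (hGo : hasOutcome G oL) (hG'o : hasOutcome G' oRminus) :
    WinsAs (gunion G G') .L .L ∧
      ∃ o : Outcome, hasOutcome (gunion G G') o ∧ (o = oL ∨ o = oLminus ∨ o = oN) := by
  have hwin := winsAs_gunion hdisj (fun e he => (hG.2 e he).1) (fun e he => (hG'.2 e he).1)
    hGo.2 hG'o.1.1
  obtain ⟨r, hr⟩ := exists_resultIs (gunion G G') .R
  refine ⟨hwin, (.Lwin, r), ⟨hwin, hr⟩, ?_⟩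
  cases r <;> simp [oL, oLminus, oN]
end APG
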